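/- Suppose a nonnegative measurable kernel φ on X × X and a measurable function g : X → [0,∞) satisfy ∫ φ(x,y) dλ(y) + ∫ φ(x,y) g(y) dλ(y) ≤ g(x) for λ-a.e. x. Define convolution powers φ^{*1} := φ and φ^{*(k+1)}(x,y) := ∫ φ(x,z) φ^{*k}(z,y) dλ(z). Then for every n ∈ ℕ, g(x) ≥ Σ_{k=1}^n ∫ φ^{*k}(x,y) dλ(y) + ∫ φ^{*n}(x,y) g(y) dλ(y) for λ-a.e. x. -/

import Mathlib

/-!
Write `S n x` for the left-hand side. By Tonelli, the `(n+1)`-st convolution power integrates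
as `∫ φ(x,z) (∫ φ^{*n}(z,y) w(y) dy) dz`, so `S (n+1) x = ∫ φ(x,y) dy + ∫ φ(x,z) S n z dz`.
Hence `S n ≤ g` a.e. gives `S (n+1) x ≤ ∫ φ(x,y) dy + ∫ φ(x,z) g z dz ≤ g x` a.e.
-/

open MeasureTheory
open scoped ENNReal NNReal

/-- The convolution powers of a kernel: `convPow μ φ k = φ^{*(k+1)}`, i.e.
`convPow μ φ 0 = φ^{*1} = φ` and `φ^{*(k+1)}(x,y) = ∫ φ(x,z) φ^{*k}(z,y) dμ(z)`. -/
noncomputable def convPow {X : Type*} [MeasurableSpace X] (μ : Measure X)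
    (φ : X → X → ℝ≥0∞) : ℕ → X → X → ℝ≥0∞
  | 0 => φ
  | (k + 1) => fun x y => ∫⁻ z, φ x z * convPow μ φ k z y ∂μ

section convPow

variable {X : Type*} [MeasurableSpace X] {μ : Measure X} [SFinite μ] {φ : X → X → ℝ≥0∞}

theorem measurable_uncurry_convPow (hφ : Measurable (Function.uncurry φ)) :
    ∀ k, Measurable (Function.uncurry (convPow μ φ k))
  | 0 => hφ
  | k + 1 => by
    have hk := measurable_uncurry_convPow hφ k
    exact Measurable.lintegral_prod_right'
      ((hφ.comp (measurable_fst.fst.prodMk measurable_snd)).mul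
        (hk.comp (measurable_snd.prodMk measurable_fst.snd)))

theorem measurable_lintegral_convPow_mul (hφ : Measurable (Function.uncurry φ))
    {w : X → ℝ≥0∞} (hw : Measurable w) (k : ℕ) :
    Measurable fun x => ∫⁻ y, convPow μ φ k x y * w y ∂μ :=
  ((measurable_uncurry_convPow hφ k).mul (hw.comp measurable_snd)).lintegral_prod_right'

theorem lintegral_convPow_succ_mul (hφ : Measurable (Function.uncurry φ))
    {w : X → ℝ≥0∞} (hw : Measurable w) (k : ℕ) (x : X) :
    ∫⁻ y, convPow μ φ (k + 1) x y * w y ∂μ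
      = ∫⁻ z, φ x z * ∫⁻ y, convPow μ φ k z y * w y ∂μ ∂μ := by
  have hk := measurable_uncurry_convPow (μ := μ) hφ k
  have hφx : Measurable (φ x) := hφ.comp (measurable_const.prodMk measurable_id)
  calc ∫⁻ y, convPow μ φ (k + 1) x y * w y ∂μ
      = ∫⁻ y, ∫⁻ z, φ x z * (convPow μ φ k z y * w y) ∂μ ∂μ := by
        refine lintegral_congr fun y => ?_
        have hy : Measurable fun z => φ x z * convPow μ φ k z y :=
          hφx.mul (hk.comp (measurable_id.prodMk measurable_const))
        simp only [convPow, ← lintegral_mul_const _ hy, mul_assoc]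
    _ = ∫⁻ z, ∫⁻ y, φ x z * (convPow μ φ k z y * w y) ∂μ ∂μ :=
        lintegral_lintegral_swap ((hφx.comp measurable_snd).mul
          ((hk.comp measurable_swap).mul (hw.comp measurable_fst))).aemeasurable
    _ = ∫⁻ z, φ x z * ∫⁻ y, convPow μ φ k z y * w y ∂μ ∂μ := by
        refine lintegral_congr fun z => ?_
        exact lintegral_const_mul _ ((hk.comp (measurable_const.prodMk measurable_id)).mul hw)

theorem lintegral_convPow_succ (hφ : Measurable (Function.uncurry φ)) (k : ℕ) (x : X) :
    ∫⁻ y, convPow μ φ (k + 1) x y ∂μ = ∫⁻ z, φ x z * ∫⁻ y, convPow μ φ k z y ∂μ ∂μ := by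
  simpa only [Pi.one_apply, mul_one] using lintegral_convPow_succ_mul hφ measurable_one k x

theorem sum_lintegral_convPow_add_lintegral_convPow_mul_succ
    (hφ : Measurable (Function.uncurry φ)) {w : X → ℝ≥0∞} (hw : Measurable w) (n : ℕ) (x : X) :
    (∑ k ∈ Finset.range (n + 2), ∫⁻ y, convPow μ φ k x y ∂μ)
        + ∫⁻ y, convPow μ φ (n + 1) x y * w y ∂μ
      = ∫⁻ y, φ x y ∂μ + ∫⁻ z, φ x z * ((∑ k ∈ Finset.range (n + 1), ∫⁻ y, convPow μ φ k z y ∂μ)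
          + ∫⁻ y, convPow μ φ n z y * w y ∂μ) ∂μ := by
  have hφx : Measurable (φ x) := hφ.comp (measurable_const.prodMk measurable_id)
  have hsum (k : ℕ) : Measurable fun z => φ x z * ∫⁻ y, convPow μ φ k z y ∂μ :=
    hφx.mul (measurable_uncurry_convPow hφ k).lintegral_prod_right'
  have hrem : Measurable fun z => φ x z * ∫⁻ y, convPow μ φ n z y * w y ∂μ :=
    hφx.mul (measurable_lintegral_convPow_mul hφ hw n)
  simp only [mul_add, Finset.mul_sum]
  rw [lintegral_add_right _ hrem, lintegral_finsetSum _ fun k _ => hsum k,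
    ← lintegral_convPow_succ_mul hφ hw, Finset.sum_range_succ' _ (n + 1)]
  simp only [← lintegral_convPow_succ hφ, convPow, add_comm, add_left_comm]

end convPow

theorem stmt2_general {X : Type*} [MeasurableSpace X] (lam : Measure X) [SigmaFinite lam]
    (φ : X → X → ℝ≥0∞) (hφm : Measurable (Function.uncurry φ))
    (g : X → ℝ≥0) (hgm : Measurable g)
    (h : ∀ᵐ x ∂lam,
      (∫⁻ y, φ x y ∂lam) + (∫⁻ y, φ x y * (g y : ℝ≥0∞) ∂lam) ≤ (g x : ℝ≥0∞)) :
    ∀ n : ℕ, ∀ᵐ x ∂lam,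
      (∑ k ∈ Finset.range (n + 1), ∫⁻ y, convPow lam φ k x y ∂lam) +
        (∫⁻ y, convPow lam φ n x y * (g y : ℝ≥0∞) ∂lam) ≤ (g x : ℝ≥0∞) := by
  intro n
  induction n with
  | zero => simpa [convPow] using h
  | succ n ih =>
    filter_upwards [h] with x hx
    rw [sum_lintegral_convPow_add_lintegral_convPow_mul_succ hφm hgm.coe_nnreal_ennreal]
    calc _ ≤ ∫⁻ y, φ x y ∂lam + ∫⁻ z, φ x z * (g z : ℝ≥0∞) ∂lam := by
          gcongr ∫⁻ y, φ x y ∂lam + ?_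
          exact lintegral_mono_ae (ih.mono fun z hz => mul_le_mul_right hz _)
      _ ≤ g x := hx

/-- if `∫ φ(x,y) dλ(y) + ∫ φ(x,y) g(y) dλ(y) ≤ g(x)` λ-a.e., then for every
`n ≥ 1` (here `n+1`), `g(x) ≥ Σ_{k=1}^{n+1} ∫ φ^{*k}(x,y) dλ(y) + ∫ φ^{*(n+1)}(x,y) g(y) dλ(y)`
for λ-a.e. `x`. -/
theorem stmt2 {X : Type*} [MeasurableSpace X] (lam : Measure X) [SigmaFinite lam]
    (φ : X → X → ℝ≥0∞) (hφm : Measurable (Function.uncurry φ))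
    (hφ1 : ∀ x y, φ x y ≤ 1) (hsym : ∀ x y, φ x y = φ y x)
    (g : X → ℝ≥0) (hgm : Measurable g)
    (h : ∀ᵐ x ∂lam,
      (∫⁻ y, φ x y ∂lam) + (∫⁻ y, φ x y * (g y : ℝ≥0∞) ∂lam) ≤ (g x : ℝ≥0∞)) :
    ∀ n : ℕ, ∀ᵐ x ∂lam,
      (∑ k ∈ Finset.range (n + 1), ∫⁻ y, convPow lam φ k x y ∂lam) +
        (∫⁻ y, convPow lam φ n x y * (g y : ℝ≥0∞) ∂lam) ≤ (g x : ℝ≥0∞) :=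
  stmt2_general lam φ hφm g hgm h
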